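/- For every n ≥ 2, the polynomial identity Ψ_{C_n}(t) = (1 + (2n−1)t)·Ψ_{C_{n−1}}(t) + 2t(1−t)·Ψ'_{C_{n−1}}(t) holds in ℤ[t], where Ψ' denotes the formal derivative with respect to t. -/

import Mathlib

open scoped Classical

/-- A signed permutation of length `n`: a permutation `w` of `ℤ` with
`w(-i) = -w(i)` that fixes every integer of absolute value greater than `n`. -/
def IsSignedPerm (n : ℕ) (w : Equiv.Perm ℤ) : Prop :=
  (∀ i : ℤ, w (-i) = - w i) ∧ ∀ i : ℤ, (n : ℤ) < |i| → w i = i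

/-- Membership in `X_n := {w ∈ 𝔅_n : w⁻¹(1) > 0}`. -/
def InXn (n : ℕ) (w : Equiv.Perm ℤ) : Prop :=
  IsSignedPerm n w ∧ 0 < w.symm 1

/-- The type B descent number `des_B(w) = #{i ∈ {0,…,n-1} : w_i > w_{i+1}}`,
with the convention `w_0 = 0` (automatic, since a signed permutation fixes `0`). -/
noncomputable def desB (n : ℕ) (w : Equiv.Perm ℤ) : ℕ :=
  ((Finset.range n).filter fun i => w ((i : ℤ) + 1) < w (i : ℤ)).card

/-- The flag-excedance `fexc(w) = 2·#{i : w_i > i} + #{i : w_i < 0}`. -/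
noncomputable def fexc (n : ℕ) (w : Equiv.Perm ℤ) : ℕ :=
  2 * ((Finset.Icc (1 : ℤ) (n : ℤ)).filter fun i => i < w i).card
    + ((Finset.Icc (1 : ℤ) (n : ℤ)).filter fun i => w i < 0).card

/-- The cyclic successor on `{-n,…,-1,1,…,n}` (with `(-1)⁺ = 1` and `n⁺ = -n`). -/
def csucc (n : ℕ) (i : ℤ) : ℤ :=
  if i = -1 then 1 else if i = (n : ℤ) then -(n : ℤ) else i + 1

/-- The circular descent set `CDes(w) = {i ∈ {-n,…,-1,1,…,n} : w(i) > w(i⁺)}`. -/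
noncomputable def cdesSet (n : ℕ) (w : Equiv.Perm ℤ) : Finset ℤ :=
  (Finset.Icc (-(n : ℤ)) (n : ℤ)).filter fun i => i ≠ 0 ∧ w (csucc n i) < w i

/-- The circular descent number `cdes(w) = |CDes(w)|`. -/
noncomputable def cdes (n : ℕ) (w : Equiv.Perm ℤ) : ℕ := (cdesSet n w).card

/-- `a ≪ b`: there is a nonzero integer strictly between `a` and `b`. -/
def Lll (a b : ℤ) : Prop := ∃ c : ℤ, c ≠ 0 ∧ a < c ∧ c < b

/-- The big ascent number `basc(w) = |BAsc(w)|`, where `BAsc(w) ⊆ {-1,1,…,n}`: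
`-1 ∈ BAsc(w)` iff `w_1 ≥ 2`; for `1 ≤ i ≤ n-1`, `i ∈ BAsc(w)` iff `w_i ≪ w_{i+1}`;
and `n ∈ BAsc(w)` iff `w_n ≤ -2`. -/
noncomputable def basc (n : ℕ) (w : Equiv.Perm ℤ) : ℕ :=
  ((insert (-1 : ℤ) (Finset.Icc (1 : ℤ) (n : ℤ))).filter fun i =>
    if i = -1 then 2 ≤ w 1
    else if i = (n : ℤ) then w (n : ℤ) ≤ -2
    else Lll (w i) (w (i + 1))).card

/-- `L'_{n,k}(r)`: the number of half-integer points in the `r`-th dilate of the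
half-open type C hypersimplex `Δ'_{C_n,k}`, in the `y`-coordinates. -/
noncomputable def Lp (n k r : ℕ) : ℕ :=
  if k = 1 then
    Set.ncard {y : Fin n → ℤ |
      (∀ j, 0 ≤ y j ∧ y j ≤ 2 * (r : ℤ)) ∧ (∀ j : Fin n, (j : ℕ) = 0 → y j ≤ (r : ℤ)) ∧
      0 ≤ ∑ j, y j ∧ ∑ j, y j ≤ (r : ℤ)}
  else
    Set.ncard {y : Fin n → ℤ |
      (∀ j, 0 ≤ y j ∧ y j ≤ 2 * (r : ℤ)) ∧ (∀ j : Fin n, (j : ℕ) = 0 → y j ≤ (r : ℤ)) ∧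
      ((k : ℤ) - 1) * r < ∑ j, y j ∧ ∑ j, y j ≤ (k : ℤ) * r}

/-- `L_{n,k}(r)`: the number of half-integer points in the `r`-th dilate of the
closed type C hypersimplex `Δ_{C_n,k}`, in the `y`-coordinates. -/
noncomputable def Lc (n k r : ℕ) : ℕ :=
  Set.ncard {y : Fin n → ℤ |
    (∀ j, 0 ≤ y j ∧ y j ≤ 2 * (r : ℤ)) ∧ (∀ j : Fin n, (j : ℕ) = 0 → y j ≤ (r : ℤ)) ∧
    ((k : ℤ) - 1) * r ≤ ∑ j, y j ∧ ∑ j, y j ≤ (k : ℤ) * r}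

/-- `ψ_{n,k} = #{w ∈ X_n : basc(w) = k}`. -/
noncomputable def psiN (n k : ℕ) : ℕ :=
  {w : Equiv.Perm ℤ | InXn n w ∧ basc n w = k}.ncard

/-- `ψ_{n,k}` with an integer index (`0` for negative `k`). -/
noncomputable def psiZ (n : ℕ) (k : ℤ) : ℕ :=
  {w : Equiv.Perm ℤ | InXn n w ∧ (basc n w : ℤ) = k}.ncard

/-- `Ψ_{C_n}(t) = Σ_k ψ_{n,k} t^k ∈ ℤ[t]`. -/
noncomputable def PsiC (n : ℕ) : Polynomial ℤ :=
  ∑ᶠ k : ℕ, (psiN n k : Polynomial ℤ) * Polynomial.X ^ k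

/-- `Ψ_{C_n}(t)` with rational coefficients. -/
noncomputable def PsiCQ (n : ℕ) : Polynomial ℚ :=
  ∑ᶠ k : ℕ, (psiN n k : Polynomial ℚ) * Polynomial.X ^ k

/-- The descent number of a permutation of `{1,…,m}`. -/
noncomputable def desA (m : ℕ) (σ : Equiv.Perm (Fin m)) : ℕ :=
  (Finset.univ.filter fun i : Fin m =>
    ∃ h : (i : ℕ) + 1 < m, σ ⟨(i : ℕ) + 1, h⟩ < σ i).card

/-- The classical (type A) Eulerian polynomial `E_m^A(t) = Σ_{σ ∈ S_m} t^{des σ}`. -/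
noncomputable def EulerianA (m : ℕ) : Polynomial ℚ :=
  ∑ σ : Equiv.Perm (Fin m), Polynomial.X ^ desA m σ

/-- The relation `u ⇀ w` on `X_n`. -/
def covRel (n : ℕ) (u w : Equiv.Perm ℤ) : Prop :=
  InXn n u ∧ InXn n w ∧
    ((2 ≤ w 1 ∧ u = w * Equiv.swap (1 : ℤ) (-1)) ∨
     (∃ i : ℤ, 1 ≤ i ∧ i ≤ (n : ℤ) - 1 ∧ Lll (w i) (w (i + 1)) ∧
        u = w * (Equiv.swap i (i + 1) * Equiv.swap (-i) (-(i + 1)))) ∨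
     (w (n : ℤ) ≤ -2 ∧ u = w * Equiv.swap (n : ℤ) (-(n : ℤ))))

/-- The `i`-th coordinate (`1 ≤ i ≤ n`) of the vertex `v^j(w)` (`1 ≤ j ≤ n+1`):
`v^{n+1}_i(w) = #({1,…,i-1} ∩ CDes(w⁻¹))` and `v^j = v^{j+1} + ½ e_{w_j}`. -/
noncomputable def vcoord (n : ℕ) (w : Equiv.Perm ℤ) (j : ℕ) (i : ℕ) : ℚ :=
  ((Finset.Icc (1 : ℤ) ((i : ℤ) - 1) ∩ cdesSet n w.symm).card : ℚ)
    + (1 / 2) * ∑ m ∈ Finset.Icc (j : ℤ) (n : ℤ),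
        (if w m = (i : ℤ) then (1 : ℚ) else if w m = -(i : ℤ) then -1 else 0)

/-- `u` is the image `τ_n(w)`: in window notation `u = 1 w'_1 ⋯ w'_n`, where
`w'_i = w_i + 1` if `w_i > 0` and `w'_i = w_i - 1` if `w_i < 0`. -/
def isTau (n : ℕ) (w u : Equiv.Perm ℤ) : Prop :=
  u 1 = 1 ∧ ∀ i : ℤ, 1 ≤ i → i ≤ (n : ℤ) →
    u (i + 1) = if 0 < w i then w i + 1 else w i - 1

/-! Encode `w ∈ X_n` by its window `w_1 ⋯ w_n`, padded with `w_0 = w_{n+1} = 0`; then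
`BAsc(w)` is the set of gaps `i ∈ {0, …, n}` with `w_i ≪ w_{i+1}`. For `m ≥ 1`, every
element of `X_{m+1}` arises in exactly one way by inserting `±(m+1)` into one of the
`m + 1` gaps of some `w ∈ X_m`. Inserting `m + 1` into gap `i` keeps `basc` iff gap `i` is
a big ascent or `w_i = m`; inserting `-(m+1)` keeps it iff gap `i` is a big ascent or
`w_{i+1} = -m`; otherwise `basc` grows by one. As `±m` sits in exactly one of these places,
`2b + 1` of the `2(m+1)` insertions keep `b = basc(w)` and the others raise it, so `w`
contributes `(2b+1) t^b + (2m+1-2b) t^(b+1) = (1 + (2m+1)t) t^b + 2t(1-t) (t^b)'` to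
`Ψ_{C_{m+1}}(t)`. -/

open Finset Polynomial

lemma lll_iff {a b : ℤ} : Lll a b ↔ a + 2 ≤ b ∧ ¬(a = -1 ∧ b = 1) := by
  constructor
  · rintro ⟨c, hc, hac, hcb⟩
    omega
  · rintro ⟨hab, hne⟩
    by_cases ha : a = -1
    · exact ⟨a + 2, by omega, by omega, by omega⟩
    · exact ⟨a + 1, by omega, by omega, by omega⟩

section Insertion

variable {α : Type*}

def insertAt (p : ℕ) (x : α) (f : ℕ → α) (i : ℕ) : α :=
  if i < p then f i else if i = p then x else f (i - 1)

def deleteAt (p : ℕ) (f : ℕ → α) (i : ℕ) : α :=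
  f (if i < p then i else i + 1)

@[simp]
lemma insertAt_self (p : ℕ) (x : α) (f : ℕ → α) : insertAt p x f p = x := by
  simp [insertAt]

lemma deleteAt_insertAt (p : ℕ) (x : α) (f : ℕ → α) : deleteAt p (insertAt p x f) = f := by
  funext i
  simp only [deleteAt, insertAt]
  split_ifs <;> first | rfl | omega

lemma insertAt_deleteAt (p : ℕ) (f : ℕ → α) : insertAt p (f p) (deleteAt p f) = f := by
  funext i
  simp only [deleteAt, insertAt]
  split_ifs <;> first | rfl | (congr 1; omega)

lemma sum_range_succ_insertAt {M : Type*} [AddCommMonoid M] (f : ℕ → M) (x : M) {p n : ℕ}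
    (hp : p ≤ n) : ∑ i ∈ range (n + 1), insertAt p x f i = ∑ i ∈ range n, f i + x := by
  induction n with
  | zero => simp [Nat.le_zero.mp hp]
  | succ n ih =>
    rcases hp.lt_or_eq with hp | rfl
    · rw [sum_range_succ, ih (by omega), sum_range_succ, insertAt, if_neg (by omega),
        if_neg (by omega), Nat.add_sub_cancel, add_right_comm]
    · rw [sum_range_succ, insertAt_self]
      congr 1
      exact sum_congr rfl fun i hi => if_pos (mem_range.mp hi)

lemma insertAt_of_ne {p i : ℕ} (x : α) (f : ℕ → α) (h : i ≠ p) :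
    insertAt p x f i = f (if i < p then i else i - 1) := by
  unfold insertAt
  split_ifs <;> trivial

end Insertion

/-- `f` is the zero-padded window `0, w_1, …, w_m, 0, 0, …` of some `w ∈ X_m`. -/
structure IsWindow (m : ℕ) (f : ℕ → ℤ) : Prop where
  apply_zero : f 0 = 0
  apply_of_lt : ∀ ⦃i⦄, m < i → f i = 0
  mapsTo : Set.MapsTo (fun i => (f i).natAbs) (Set.Icc 1 m) (Set.Icc 1 m)
  injOn : Set.InjOn (fun i => (f i).natAbs) (Set.Icc 1 m)
  exists_eq_one : ∃ i, f i = 1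

namespace IsWindow

variable {m : ℕ} {f : ℕ → ℤ}

lemma natAbs_le (hf : IsWindow m f) (i : ℕ) : (f i).natAbs ≤ m := by
  rcases Nat.eq_zero_or_pos i with rfl | hi
  · simp [hf.apply_zero]
  rcases le_or_gt i m with him | hmi
  · exact (hf.mapsTo ⟨hi, him⟩).2
  · simp [hf.apply_of_lt hmi]

lemma mem_Icc_of_ne_zero (hf : IsWindow m f) {i : ℕ} (hi : f i ≠ 0) : i ∈ Set.Icc 1 m := by
  refine ⟨Nat.pos_of_ne_zero ?_, le_of_not_gt ?_⟩
  · rintro rfl; exact hi hf.apply_zero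
  · intro h; exact hi (hf.apply_of_lt h)

lemma natAbs_pos (hf : IsWindow m f) {i : ℕ} (hi : i ∈ Set.Icc 1 m) : 0 < (f i).natAbs :=
  (hf.mapsTo hi).1

lemma eq_of_natAbs_eq (hf : IsWindow m f) {i j : ℕ} (h : (f i).natAbs = (f j).natAbs)
    (hi : f i ≠ 0) : i = j := by
  have hj : f j ≠ 0 := by omega
  exact hf.injOn (hf.mem_Icc_of_ne_zero hi) (hf.mem_Icc_of_ne_zero hj) h

lemma one_le (hf : IsWindow m f) : 1 ≤ m := by
  obtain ⟨i, hi⟩ := hf.exists_eq_one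
  have h := hf.mem_Icc_of_ne_zero (i := i) (by omega)
  exact h.1.trans h.2

lemma exists_natAbs_eq (hf : IsWindow m f) {v : ℕ} (hv : v ∈ Set.Icc 1 m) :
    ∃ i ∈ Set.Icc 1 m, (f i).natAbs = v :=
  ((Set.finite_Icc 1 m).injOn_iff_bijOn_of_mapsTo hf.mapsTo).mp hf.injOn |>.surjOn hv

end IsWindow

lemma finite_setOf_isWindow (m : ℕ) : {f | IsWindow m f}.Finite := by
  refine Set.Finite.of_finite_image (f := fun f (i : Fin (m + 1)) => f i) ?_ ?_
  · have hbox : (Set.univ.pi fun _ : Fin (m + 1) => Set.Icc (-(m : ℤ)) m).Finite :=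
      Set.Finite.pi fun _ => Set.finite_Icc _ _
    refine hbox.subset ?_
    rintro _ ⟨f, hf, rfl⟩ i -
    have := hf.natAbs_le i
    simp only [Set.mem_Icc]
    omega
  · intro f hf g hg hfg
    funext i
    rcases le_or_gt i m with him | hmi
    · exact congrFun hfg ⟨i, by omega⟩
    · rw [hf.apply_of_lt hmi, hg.apply_of_lt hmi]

noncomputable def windows (m : ℕ) : Finset (ℕ → ℤ) := (finite_setOf_isWindow m).toFinset

@[simp]
lemma mem_windows {m : ℕ} {f : ℕ → ℤ} : f ∈ windows m ↔ IsWindow m f :=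
  Set.Finite.mem_toFinset _

noncomputable def windowBasc (m : ℕ) (f : ℕ → ℤ) : ℕ :=
  #{i ∈ range (m + 1) | Lll (f i) (f (i + 1))}

lemma windowBasc_insertAt_add (f : ℕ → ℤ) (x : ℤ) {i m : ℕ} (hi : i ≤ m) :
    windowBasc (m + 1) (insertAt (i + 1) x f) + (if Lll (f i) (f (i + 1)) then 1 else 0) =
      windowBasc m f + (if Lll (f i) x then 1 else 0) + (if Lll x (f (i + 1)) then 1 else 0) := by
  set A : ℕ → ℕ := fun j => if Lll (f j) (f (j + 1)) then 1 else 0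
  have hsplit :
      (fun j => if Lll (insertAt (i + 1) x f j) (insertAt (i + 1) x f (j + 1)) then 1 else 0)
        = insertAt (i + 1) (if Lll x (f (i + 1)) then 1 else 0)
          (Function.update A i (if Lll (f i) x then 1 else 0)) := by
    funext j
    rcases lt_trichotomy j i with hj | rfl | hj
    · simp [insertAt, A, Function.update, hj.ne, show j < i + 1 by omega,
        show j + 1 < i + 1 by omega]
    · simp [insertAt]
    · obtain hj | rfl := (show i + 1 ≤ j from hj).lt_or_eq
      · simp [insertAt, A, Function.update, show ¬ j < i + 1 by omega, show j ≠ i + 1 by omega,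
          show ¬ j + 1 < i + 1 by omega, show j ≠ i by omega, show j - 1 ≠ i by omega,
          show j - 1 + 1 = j by omega]
      · simp [insertAt]
  have hA : windowBasc m f = A i + ∑ j ∈ range (m + 1) \ {i}, A j := by
    rw [windowBasc, card_filter]
    exact sum_eq_add_sum_sdiff_singleton_of_mem (mem_range.mpr (by omega)) A
  rw [windowBasc, card_filter, hsplit, sum_range_succ_insertAt _ _ (by omega),
    sum_update_of_mem (mem_range.mpr (by omega)), hA]
  ring

def KeepsBasc (m : ℕ) (f : ℕ → ℤ) (z : ℕ × ℤ) : Prop :=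
  Lll (f z.1) (f (z.1 + 1)) ∨ (0 < z.2 ∧ f z.1 = m) ∨ (z.2 < 0 ∧ f (z.1 + 1) = -m)

/-- `(i, x)` stands for inserting `x` between the positions `i` and `i + 1`. -/
def insertions (m : ℕ) : Finset (ℕ × ℤ) :=
  range (m + 1) ×ˢ {(m : ℤ) + 1, -((m : ℤ) + 1)}

lemma mem_insertions {m : ℕ} {z : ℕ × ℤ} :
    z ∈ insertions m ↔ z.1 ≤ m ∧ z.2.natAbs = m + 1 := by
  simp only [insertions, mem_product, mem_range, mem_insert, mem_singleton]
  omega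

namespace IsWindow

variable {m : ℕ} {f : ℕ → ℤ}

lemma windowBasc_insertAt (hf : IsWindow m f) {i : ℕ} {x : ℤ} (hi : i ≤ m)
    (hx : x.natAbs = m + 1) :
    windowBasc (m + 1) (insertAt (i + 1) x f) =
      windowBasc m f + if KeepsBasc m f (i, x) then 0 else 1 := by
  have h := windowBasc_insertAt_add f x hi
  have := hf.natAbs_le i
  have := hf.natAbs_le (i + 1)
  simp only [KeepsBasc, lll_iff] at h ⊢
  split_ifs at h ⊢ <;> omega

lemma card_filter_natAbs_eq (hf : IsWindow m f) {v : ℕ} (hv : v ∈ Set.Icc 1 m) {n : ℕ}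
    (hn : m < n) : #{i ∈ range n | (f i).natAbs = v} = 1 := by
  obtain ⟨q, hq, rfl⟩ := hf.exists_natAbs_eq hv
  refine card_eq_one.mpr ⟨q, ext fun i => ?_⟩
  simp only [mem_filter, mem_range, mem_singleton]
  have := hf.natAbs_pos hq
  refine ⟨fun h => hf.eq_of_natAbs_eq h.2 (by omega), ?_⟩
  rintro rfl
  exact ⟨by linarith [hq.2], rfl⟩

lemma card_filter_keepsBasc (hf : IsWindow m f) :
    #{z ∈ insertions m | KeepsBasc m f z} = 2 * windowBasc m f + 1 := by
  have hm := hf.one_le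
  have hgap : ∀ i ∈ range (m + 1),
      ∑ x ∈ ({(m : ℤ) + 1, -((m : ℤ) + 1)} : Finset ℤ),
          (if KeepsBasc m f (i, x) then 1 else 0)
        = 2 * (if Lll (f i) (f (i + 1)) then 1 else 0)
          + ((if f i = m then 1 else 0) + if f (i + 1) = -m then 1 else 0) := by
    intro i _
    rw [sum_pair (by omega)]
    have := hf.natAbs_le i
    have := hf.natAbs_le (i + 1)
    simp only [KeepsBasc, lll_iff]
    split_ifs <;> omega
  -- the entry `±m` is adjacent to exactly one gap on the side that keeps the number of big ascents
  have hmax : ∑ i ∈ range (m + 1),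
      ((if f i = m then 1 else 0) + if f (i + 1) = -m then 1 else 0) = 1 := by
    have hlast : ∑ i ∈ range (m + 1), (if f i = m then 1 else 0)
        = ∑ i ∈ range (m + 2), (if f i = m then 1 else 0) := by
      rw [sum_range_succ _ (m + 1), hf.apply_of_lt (by omega), if_neg (by omega), add_zero]
    have hfirst : ∑ i ∈ range (m + 1), (if f (i + 1) = -m then 1 else 0)
        = ∑ i ∈ range (m + 2), (if f i = -m then 1 else 0) := by
      rw [sum_range_succ' _ (m + 1), hf.apply_zero, if_neg (by omega), add_zero]
    rw [sum_add_distrib, hlast, hfirst, ← sum_add_distrib]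
    calc _ = #{i ∈ range (m + 2) | (f i).natAbs = m} := by
          rw [card_filter]
          exact sum_congr rfl fun i _ => by split_ifs <;> omega
      _ = 1 := hf.card_filter_natAbs_eq ⟨hm, le_rfl⟩ (by omega)
  rw [card_filter, insertions, sum_product, sum_congr rfl hgap, sum_add_distrib, ← mul_sum, hmax,
    windowBasc, card_filter]

lemma sum_insertions_X_pow (hf : IsWindow m f) :
    ∑ z ∈ insertions m, (X : ℤ[X]) ^ windowBasc (m + 1) (insertAt (z.1 + 1) z.2 f) =
      (1 + C (2 * (m : ℤ) + 1) * X) * X ^ windowBasc m f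
        + 2 * X * (1 - X) * derivative (X ^ windowBasc m f) := by
  set b := windowBasc m f
  have hkeep := hf.card_filter_keepsBasc
  have hall : #{z ∈ insertions m | KeepsBasc m f z} + #{z ∈ insertions m | ¬KeepsBasc m f z}
      = #(insertions m) := card_filter_add_card_filter_not _
  have hcard : #(insertions m) = 2 * (m + 1) := by
    rw [insertions, card_product, card_range, card_pair (by omega), mul_comm]
  have hnot : #{z ∈ insertions m | ¬KeepsBasc m f z} = 2 * m + 1 - 2 * b := by omega
  calc ∑ z ∈ insertions m, (X : ℤ[X]) ^ windowBasc (m + 1) (insertAt (z.1 + 1) z.2 f)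
      = ∑ z ∈ insertions m, if KeepsBasc m f z then X ^ b else X ^ (b + 1) := by
        refine sum_congr rfl fun z hz => ?_
        obtain ⟨hz1, hz2⟩ := mem_insertions.mp hz
        rw [hf.windowBasc_insertAt hz1 hz2]
        split_ifs <;> rfl
    _ = ((2 * b + 1 : ℕ) : ℤ[X]) * X ^ b
          + ((2 * m + 1 - 2 * b : ℕ) : ℤ[X]) * X ^ (b + 1) := by
        rw [sum_ite, sum_const, sum_const, nsmul_eq_mul, nsmul_eq_mul, hkeep, hnot]
    _ = _ := by
        rw [Nat.cast_sub (by omega), derivative_X_pow,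
          show C (2 * (m : ℤ) + 1) = 2 * (m : ℤ[X]) + 1 by simp]
        rcases b with _ | b
        · simp only [Nat.cast_zero, C_0]; push_cast; ring
        · simp only [C_eq_natCast]; push_cast; ring

lemma eq_of_natAbs_insertAt (hf : IsWindow m f) {p i : ℕ} {x : ℤ}
    (hi : (insertAt p x f i).natAbs = m + 1) : i = p := by
  by_contra hip
  have := hf.natAbs_le (if i < p then i else i - 1)
  rw [insertAt_of_ne x f hip] at hi
  omega

lemma insertAt (hf : IsWindow m f) {p : ℕ} {x : ℤ} (hp : 1 ≤ p) (hpm : p ≤ m + 1)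
    (hx : x.natAbs = m + 1) : IsWindow (m + 1) (insertAt p x f) := by
  have hshift :
      ∀ i ∈ Set.Icc 1 (m + 1), i ≠ p → (if i < p then i else i - 1) ∈ Set.Icc 1 m := by
    rintro i ⟨hi1, hi2⟩ hip
    simp only [Set.mem_Icc]
    split_ifs <;> omega
  refine ⟨?_, fun i hi => ?_, fun i hi => ?_, fun i hi j hj h => ?_, ?_⟩
  · rw [insertAt_of_ne x f (by omega), if_pos (by omega), hf.apply_zero]
  · rw [insertAt_of_ne x f (by omega), if_neg (by omega), hf.apply_of_lt (by omega)]
  · rcases eq_or_ne i p with rfl | hip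
    · simp only [insertAt_self, hx, Set.mem_Icc]
      omega
    · have := hf.mapsTo (hshift i hi hip)
      simp only [insertAt_of_ne x f hip, Set.mem_Icc] at this ⊢
      omega
  · simp only at h
    rcases eq_or_ne i p with rfl | hip
    · exact (hf.eq_of_natAbs_insertAt (by rw [← h, insertAt_self, hx])).symm
    rcases eq_or_ne j p with rfl | hjp
    · exact hf.eq_of_natAbs_insertAt (by rw [h, insertAt_self, hx])
    rw [insertAt_of_ne x f hip, insertAt_of_ne x f hjp] at h
    have := hf.natAbs_pos (hshift i hi hip)
    have := hf.eq_of_natAbs_eq h (by omega)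
    split_ifs at this <;> omega
  · obtain ⟨q, hq⟩ := hf.exists_eq_one
    by_cases hqp : q < p
    · exact ⟨q, by rw [insertAt_of_ne x f hqp.ne, if_pos hqp, hq]⟩
    · exact ⟨q + 1, by
        rw [insertAt_of_ne x f (by omega), if_neg (by omega), Nat.add_sub_cancel, hq]⟩

lemma deleteAt {t : ℕ → ℤ} (ht : IsWindow (m + 1) t) (hm : 1 ≤ m) {q : ℕ}
    (hq : (t q).natAbs = m + 1) : IsWindow m (deleteAt q t) := by
  obtain ⟨hq1, hqm⟩ := ht.mem_Icc_of_ne_zero (i := q) (by omega)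
  have hshift : ∀ i ∈ Set.Icc 1 m, (if i < q then i else i + 1) ∈ Set.Icc 1 (m + 1) ∧
      (t (if i < q then i else i + 1)).natAbs ≠ m + 1 := by
    rintro i ⟨hi1, hi2⟩
    refine ⟨by simp only [Set.mem_Icc]; split_ifs <;> omega, fun h => ?_⟩
    have := ht.eq_of_natAbs_eq (h.trans hq.symm) (by omega)
    split_ifs at this <;> omega
  refine ⟨?_, fun i hi => ?_, fun i hi => ?_, fun i hi j hj h => ?_, ?_⟩
  · simp only [_root_.deleteAt, if_pos (show 0 < q by omega), ht.apply_zero]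
  · simp only [_root_.deleteAt, if_neg (show ¬i < q by omega)]
    exact ht.apply_of_lt (by omega)
  · have hmaps := ht.mapsTo (hshift i hi).1
    have hne := (hshift i hi).2
    simp only [_root_.deleteAt, Set.mem_Icc] at hmaps hne ⊢
    omega
  · have := ht.natAbs_pos (hshift i hi).1
    have := ht.eq_of_natAbs_eq h (by omega)
    split_ifs at this <;> omega
  · obtain ⟨r, hr⟩ := ht.exists_eq_one
    have hrq : r ≠ q := by rintro rfl; omega
    by_cases hr' : r < q
    · exact ⟨r, by simp only [_root_.deleteAt, if_pos hr', hr]⟩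
    · exact ⟨r - 1, by simp only [_root_.deleteAt, if_neg (show ¬r - 1 < q by omega),
        Nat.sub_add_cancel (show 1 ≤ r by omega), hr]⟩

end IsWindow

lemma windows_succ {m : ℕ} (hm : 1 ≤ m) :
    windows (m + 1) =
      (windows m ×ˢ insertions m).image fun z => insertAt (z.2.1 + 1) z.2.2 z.1 := by
  ext t
  simp only [mem_image, mem_product, mem_windows, mem_insertions, Prod.exists]
  constructor
  · intro ht
    obtain ⟨q, ⟨hq1, hqm⟩, hq⟩ := ht.exists_natAbs_eq (v := m + 1) ⟨by omega, le_rfl⟩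
    refine ⟨deleteAt q t, q - 1, t q, ⟨ht.deleteAt hm hq, by omega, hq⟩, ?_⟩
    rw [Nat.sub_add_cancel hq1, insertAt_deleteAt]
  · rintro ⟨f, i, x, ⟨hf, hi, hx⟩, rfl⟩
    exact hf.insertAt (by omega) (by omega) hx

lemma injOn_insertAt (m : ℕ) :
    Set.InjOn (fun z : (ℕ → ℤ) × ℕ × ℤ => insertAt (z.2.1 + 1) z.2.2 z.1)
      ↑(windows m ×ˢ insertions m) := by
  rintro ⟨f, i, x⟩ hz ⟨f', i', x'⟩ hz' h
  simp only [coe_product, Set.mem_prod, mem_coe, mem_windows, mem_insertions] at hz hz' h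
  obtain ⟨hf, -, hx⟩ := hz
  obtain ⟨hf', -, hx'⟩ := hz'
  obtain rfl : i = i' := by
    have := hf'.eq_of_natAbs_insertAt (by rw [← h, insertAt_self, hx])
    omega
  obtain rfl : x = x' := by simpa using congrFun h (i + 1)
  rw [← deleteAt_insertAt (i + 1) x f, h, deleteAt_insertAt]

def window (n : ℕ) (w : Equiv.Perm ℤ) (i : ℕ) : ℤ :=
  if 1 ≤ i ∧ i ≤ n then w i else 0

namespace IsSignedPerm

variable {n : ℕ} {w : Equiv.Perm ℤ}

lemma apply_of_natAbs_lt (hw : IsSignedPerm n w) {i : ℤ} (hi : n < i.natAbs) : w i = i :=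
  hw.2 i (by rw [← Int.natCast_natAbs]; exact_mod_cast hi)

lemma apply_zero (hw : IsSignedPerm n w) : w 0 = 0 := by
  have := hw.1 0
  rw [neg_zero] at this
  omega

lemma natAbs_apply_le (hw : IsSignedPerm n w) {i : ℤ} (hi : i.natAbs ≤ n) :
    (w i).natAbs ≤ n := by
  by_contra h
  have := hw.apply_of_natAbs_lt (lt_of_not_ge h)
  rw [w.injective this] at h
  exact h hi

lemma eq_of_window_eq {w' : Equiv.Perm ℤ} (hw : IsSignedPerm n w) (hw' : IsSignedPerm n w')
    (h : window n w = window n w') : w = w' := by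
  have hpos : ∀ j : ℕ, 1 ≤ j → j ≤ n → w j = w' j := fun j h1 h2 => by
    simpa [window, h1, h2] using congrFun h j
  ext i
  rcases lt_or_ge n i.natAbs with hi | hi
  · rw [hw.apply_of_natAbs_lt hi, hw'.apply_of_natAbs_lt hi]
  rcases lt_trichotomy i 0 with hi0 | rfl | hi0
  · have := hpos (-i).toNat (by omega) (by omega)
    rw [Int.toNat_of_nonneg (by omega)] at this
    rw [← neg_neg i, hw.1, hw'.1, this]
  · rw [hw.apply_zero, hw'.apply_zero]
  · simpa [Int.toNat_of_nonneg hi0.le] using hpos i.toNat (by omega) (by omega)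

end IsSignedPerm

lemma InXn.isWindow {n : ℕ} {w : Equiv.Perm ℤ} (hn : 1 ≤ n) (hw : InXn n w) :
    IsWindow n (window n w) where
  apply_zero := by simp [window]
  apply_of_lt i hi := by simp [window, show ¬i ≤ n by omega]
  mapsTo i hi := by
    obtain ⟨hi1, hi2⟩ := hi
    have hne : w i ≠ 0 := fun h => by
      have := w.injective (h.trans hw.1.apply_zero.symm)
      omega
    have := hw.1.natAbs_apply_le (i := i) (by simpa using hi2)
    simp only [window, hi1, hi2, and_self, if_true, Set.mem_Icc]
    omega
  injOn i hi j hj h := by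
    obtain ⟨hi1, hi2⟩ := hi
    obtain ⟨hj1, hj2⟩ := hj
    simp only [window, hi1, hi2, hj1, hj2, and_self, if_true] at h
    rcases Int.natAbs_eq_natAbs_iff.mp h with h | h
    · exact_mod_cast w.injective h
    · rw [← hw.1.1] at h
      have := w.injective h
      omega
  exists_eq_one := by
    have hq : w (w.symm 1) = 1 := w.apply_symm_apply 1
    have hqn : (w.symm 1).natAbs ≤ n := by
      by_contra h
      rw [hw.1.apply_of_natAbs_lt (lt_of_not_ge h)] at hq
      omega
    refine ⟨(w.symm 1).toNat, ?_⟩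
    have := hw.2
    rw [window, if_pos (by omega), Int.toNat_of_nonneg (by omega), hq]

def extendWindow (n : ℕ) (f : ℕ → ℤ) (i : ℤ) : ℤ :=
  if n < i.natAbs then i else if 0 ≤ i then f i.natAbs else -f i.natAbs

namespace IsWindow

variable {n : ℕ} {f : ℕ → ℤ}

lemma extendWindow_neg (hf : IsWindow n f) (i : ℤ) :
    extendWindow n f (-i) = -extendWindow n f i := by
  have : i = 0 → f i.natAbs = 0 := by rintro rfl; exact hf.apply_zero
  simp only [extendWindow, Int.natAbs_neg]
  split_ifs <;> omega

lemma bijective_extendWindow (hf : IsWindow n f) : Function.Bijective (extendWindow n f) := by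
  have hzero : ∀ i : ℤ, i.natAbs ≤ n → (f i.natAbs = 0 ↔ i = 0) := fun i hi => by
    refine ⟨fun h => ?_, by rintro rfl; exact hf.apply_zero⟩
    by_contra hi0
    have := hf.natAbs_pos (i := i.natAbs) ⟨by omega, hi⟩
    omega
  refine ⟨fun a b h => ?_, fun j => ?_⟩
  · have := hf.natAbs_le a.natAbs
    have := hf.natAbs_le b.natAbs
    unfold extendWindow at h
    by_cases ha : n < a.natAbs <;> by_cases hb : n < b.natAbs <;>
      simp only [ha, hb, if_true, if_false] at h
    · exact h
    · split_ifs at h <;> omega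
    · split_ifs at h <;> omega
    have hza := hzero a (by omega)
    have hzb := hzero b (by omega)
    by_cases h0 : f a.natAbs = 0
    · split_ifs at h <;> omega
    · have hab := hf.eq_of_natAbs_eq (i := a.natAbs) (j := b.natAbs)
        (by split_ifs at h <;> omega) h0
      rw [hab] at h h0
      split_ifs at h <;> omega
  · by_cases hj : n < j.natAbs
    · exact ⟨j, by simp [extendWindow, hj]⟩
    rcases eq_or_ne j 0 with rfl | hj0
    · exact ⟨0, by simp [extendWindow, hf.apply_zero]⟩
    obtain ⟨q, ⟨hq1, hqn⟩, hfq⟩ :=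
      hf.exists_natAbs_eq (v := j.natAbs) ⟨by omega, by omega⟩
    refine ⟨if f q = j then (q : ℤ) else -(q : ℤ), ?_⟩
    split_ifs with hqj
    · simp [extendWindow, hqj, show ¬n < q by omega]
    · simp [extendWindow, show ¬n < q by omega]
      omega

lemma exists_inXn_window_eq (hf : IsWindow n f) : ∃ w, InXn n w ∧ window n w = f := by
  set w := Equiv.ofBijective _ hf.bijective_extendWindow
  have hwnat : ∀ i : ℕ, i ≤ n → w i = f i := fun i hi => by
    simp [w, extendWindow, show ¬n < i by omega]
  obtain ⟨q, hq⟩ := hf.exists_eq_one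
  obtain ⟨hq1, hqn⟩ := hf.mem_Icc_of_ne_zero (i := q) (by omega)
  refine ⟨w, ⟨⟨hf.extendWindow_neg, fun i hi => ?_⟩, ?_⟩, ?_⟩
  · have : n < i.natAbs := by
      rw [← Int.natCast_natAbs] at hi
      exact_mod_cast hi
    simp [w, extendWindow, this]
  · rw [(Equiv.symm_apply_eq w).mpr (by rw [hwnat q hqn, hq])]
    omega
  · funext i
    by_cases hi : 1 ≤ i ∧ i ≤ n
    · rw [window, if_pos hi, hwnat i hi.2]
    · rw [window, if_neg hi]
      rcases Nat.eq_zero_or_pos i with rfl | hi0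
      · exact hf.apply_zero.symm
      · exact (hf.apply_of_lt (by omega)).symm

end IsWindow

lemma basc_eq_windowBasc {n : ℕ} (hn : 1 ≤ n) (w : Equiv.Perm ℤ) :
    basc n w = windowBasc n (window n w) := by
  -- the gaps `-1, 1, …, n` of `BAsc` are the gaps `0, 1, …, n` of the zero-padded window
  set gap : ℕ → ℤ := fun j => if j = 0 then -1 else j
  have hgap : Function.Injective gap := fun a b h => by
    simp only [gap] at h
    split_ifs at h <;> omega
  have himage : insert (-1 : ℤ) (Icc 1 (n : ℤ)) = (range (n + 1)).image gap := by
    ext a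
    simp only [mem_insert, mem_Icc, mem_image, mem_range, gap]
    constructor
    · rintro (rfl | ⟨h1, h2⟩)
      · exact ⟨0, by omega, rfl⟩
      · exact ⟨a.toNat, by omega, by split_ifs <;> omega⟩
    · rintro ⟨j, hj, rfl⟩
      split_ifs <;> omega
  rw [basc, windowBasc, himage, filter_image, card_image_of_injective _ hgap]
  refine congrArg card (filter_congr fun j hj => ?_)
  rw [mem_range] at hj
  rcases Nat.eq_zero_or_pos j with rfl | hj0
  · simp [gap, window, lll_iff, hn]
  · by_cases hjn : j = n
    · subst hjn
      simp [gap, window, lll_iff, show j ≠ 0 by omega, show 1 ≤ j by omega]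
      omega
    · simp [gap, window, show j ≠ 0 by omega, show (j : ℤ) ≠ n by omega,
        show 1 ≤ j by omega, show j ≤ n by omega, show j + 1 ≤ n by omega]

lemma psiN_eq_card_windows {n : ℕ} (hn : 1 ≤ n) (k : ℕ) :
    psiN n k = #{f ∈ windows n | windowBasc n f = k} := by
  have hinj : Set.InjOn (window n) {w | InXn n w ∧ basc n w = k} :=
    fun w hw w' hw' h => hw.1.1.eq_of_window_eq hw'.1.1 h
  rw [psiN, ← hinj.ncard_image, ← Set.ncard_coe_finset]
  congr 1
  ext f
  simp only [Set.mem_image, Set.mem_ofPred_eq, coe_filter, mem_windows]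
  constructor
  · rintro ⟨w, ⟨hw, rfl⟩, rfl⟩
    exact ⟨hw.isWindow hn, (basc_eq_windowBasc hn w).symm⟩
  · rintro ⟨hf, rfl⟩
    obtain ⟨w, hw, rfl⟩ := hf.exists_inXn_window_eq
    exact ⟨w, ⟨hw, basc_eq_windowBasc hn w⟩, rfl⟩

lemma PsiC_eq_sum_windows {n : ℕ} (hn : 1 ≤ n) :
    PsiC n = ∑ f ∈ windows n, X ^ windowBasc n f := by
  rw [PsiC, finsum_eq_sum_of_support_subset _ (s := (windows n).image (windowBasc n)),
    Finset.sum_comp]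
  · simp only [psiN_eq_card_windows hn, nsmul_eq_mul]
  · intro k hk
    have hψ : psiN n k ≠ 0 := fun h => by simp [h] at hk
    obtain ⟨f, hf⟩ := card_ne_zero.mp (psiN_eq_card_windows hn k ▸ hψ)
    rw [mem_filter] at hf
    exact mem_image.mpr ⟨f, hf⟩

/-- Corollary: linear polynomial recurrence.
For every `n ≥ 2`, in `ℤ[t]`:
`Ψ_{C_n}(t) = (1 + (2n-1)t) Ψ_{C_{n-1}}(t) + 2t(1-t) Ψ'_{C_{n-1}}(t)`. -/
theorem PsiC_recurrence (n : ℕ) (hn : 2 ≤ n) :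
    PsiC n = (1 + Polynomial.C (2 * (n : ℤ) - 1) * Polynomial.X) * PsiC (n - 1)
      + 2 * Polynomial.X * (1 - Polynomial.X) * Polynomial.derivative (PsiC (n - 1)) := by
  obtain ⟨m, rfl⟩ : ∃ m, n = m + 1 := ⟨n - 1, by omega⟩
  have hm : 1 ≤ m := by omega
  rw [Nat.add_sub_cancel, PsiC_eq_sum_windows (by omega), PsiC_eq_sum_windows hm, windows_succ hm,
    sum_image (injOn_insertAt m), sum_product,
    sum_congr rfl fun f hf => (mem_windows.mp hf).sum_insertions_X_pow,
    show 2 * ((m + 1 : ℕ) : ℤ) - 1 = 2 * m + 1 by push_cast; ring]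
  simp only [derivative_sum, mul_sum, sum_add_distrib]
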